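/- Let ι be a finite index type, b : ι → ℕ a block-index function, and let B, L : Matrix ι ι ℝ be such that B is strictly lower block triangular with respect to b (i.e., B i j = 0 whenever b i ≤ b j) and L is lower block triangular with respect to b (i.e., L i j = 0 whenever b i < b j). Then the matrix I − B·L is invertible, and the matrix K = L·(I − B·L)⁻¹ is lower block triangular with respect to b (i.e., K i j = 0 whenever b i < b j). -/

import Mathlib

/-!
With `A = B * L`, the matrix `A` is strictly lower block triangular, so every diagonal block of
`1 - A` is an identity block and `det (1 - A) = 1`. Since `1 - A` is lower block triangular and
invertible, so is its inverse, and `L * (1 - A)⁻¹` is a product of lower block triangular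
matrices. Lower block triangularity with respect to `b` is Mathlib's `BlockTriangular` with
respect to `toDual ∘ b`.
-/

open Matrix OrderDual

namespace Matrix

variable {m α R : Type*} {b : m → α}

def StrictlyBlockTriangular [LE α] [Zero R] (M : Matrix m m R) (b : m → α) : Prop :=
  ∀ ⦃i j⦄, b j ≤ b i → M i j = 0

namespace StrictlyBlockTriangular

theorem blockTriangular [Preorder α] [Zero R] {M : Matrix m m R}
    (hM : M.StrictlyBlockTriangular b) : M.BlockTriangular b :=
  fun _ _ hij => hM hij.le

theorem toSquareBlock_one_sub [Preorder α] [DecidableEq m] [Ring R] {M : Matrix m m R}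
    (hM : M.StrictlyBlockTriangular b) (a : α) : (1 - M).toSquareBlock b a = 1 := by
  ext i j
  have hji : b j ≤ b i := (j.2.trans i.2.symm).le
  simp [toSquareBlock_def, one_apply, Subtype.ext_iff, hM hji]

variable [LinearOrder α]

theorem mul_blockTriangular [Fintype m] [NonUnitalNonAssocSemiring R] {M N : Matrix m m R}
    (hM : M.StrictlyBlockTriangular b) (hN : N.BlockTriangular b) :
    (M * N).StrictlyBlockTriangular b := by
  intro i j hij
  rw [mul_apply]
  refine Finset.sum_eq_zero fun k _ => ?_
  rcases le_or_gt (b k) (b i) with hki | hik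
  · rw [hM hki, zero_mul]
  · rw [hN (hij.trans_lt hik), mul_zero]

variable [Fintype m] [DecidableEq m] [CommRing R] {M : Matrix m m R}

theorem det_one_sub (hM : M.StrictlyBlockTriangular b) : (1 - M).det = 1 := by
  rw [(blockTriangular_one.sub hM.blockTriangular).det]
  exact Finset.prod_eq_one fun a _ => by rw [hM.toSquareBlock_one_sub, det_one]

theorem isUnit_one_sub (hM : M.StrictlyBlockTriangular b) : IsUnit (1 - M) :=
  (isUnit_iff_isUnit_det _).mpr (hM.det_one_sub ▸ isUnit_one)

end StrictlyBlockTriangular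

theorem BlockTriangular.nonsing_inv [Fintype m] [DecidableEq m] [LinearOrder α] [CommRing R]
    {M : Matrix m m R} (hM : M.BlockTriangular b) (hU : IsUnit M) : M⁻¹.BlockTriangular b :=
  have := hU.invertible
  blockTriangular_inv_of_blockTriangular hM

end Matrix

/-- If `B` is strictly lower block triangular and `L` is lower block triangular, then
`I − B·L` is invertible and `K = L·(I − B·L)⁻¹` is lower block triangular. -/
theorem lower_block_triangular_feedback_gain
    {ι : Type*} [Fintype ι] [DecidableEq ι] (b : ι → ℕ)
    (B L : Matrix ι ι ℝ)
    (hB : ∀ i j, b i ≤ b j → B i j = 0)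
    (hL : ∀ i j, b i < b j → L i j = 0) :
    IsUnit (1 - B * L)
      ∧ ∀ i j, b i < b j → (L * (1 - B * L)⁻¹) i j = 0 := by
  have hL' : L.BlockTriangular (toDual ∘ b) := fun i j => hL i j
  have hBL : (B * L).StrictlyBlockTriangular (toDual ∘ b) :=
    StrictlyBlockTriangular.mul_blockTriangular (fun i j => hB i j) hL'
  have hU : IsUnit (1 - B * L) := hBL.isUnit_one_sub
  have hK : (L * (1 - B * L)⁻¹).BlockTriangular (toDual ∘ b) :=
    hL'.mul ((blockTriangular_one.sub hBL.blockTriangular).nonsing_inv hU)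
  exact ⟨hU, fun i j => @hK i j⟩
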